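/- arXiv:2507.00276 — 3 statements merged into one kernel-verified Lean document; each statement's English description precedes it below -/
import Mathlib

section
/- For all real numbers γ, β_p, β and every function g : ℝ → ℝ, the distribution of the magnetization equals the distribution of the two-replica overlap at temperatures β and β_p, in the sense that Σ_τ w_τ · (Σ_S g((1/N)·Σ_{v∈V} S(v)) · exp(β·H_τ(S))) / Z_τ(β) = Σ_τ w_τ · (Σ_{S¹,S²} g((1/N)·Σ_{v∈V} S¹(v)·S²(v)) · exp(β·H_τ(S¹) + β_p·H_τ(S²))) / (Z_τ(β)·Z_τ(β_p)), where w_τ = Z_τ(γ)·exp(β_p·Σ_{e∈E} τ(e)) / Z_τ(β_p). -/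
open Finset

/-- Ising energy H_t(S), spins valued in the units of the integers, i.e. {-1, 1}. -/
noncomputable def isingH {V E : Type*} [Fintype E] (i j : E → V)
    (τ : E → ℤˣ) (S : V → ℤˣ) : ℝ :=
  ∑ e, ((τ e : ℤ) : ℝ) * ((S (i e) : ℤ) : ℝ) * ((S (j e) : ℤ) : ℝ)

/-- Partition function Z_t(b). -/
noncomputable def isingZ {V E : Type*} [Fintype V] [DecidableEq V] [Fintype E]
    (i j : E → V) (β : ℝ) (τ : E → ℤˣ) : ℝ :=
  ∑ S : V → ℤˣ, Real.exp (β * isingH i j τ S)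


section aux
variable {V E : Type*} [Fintype V] [DecidableEq V] [Fintype E] [DecidableEq E]
variable (i j : E → V)

def isingGauge (S2 : V → ℤˣ) (τ : E → ℤˣ) : E → ℤˣ := fun e => τ e * S2 (i e) * S2 (j e)

lemma gauge_gauge (S2 : V → ℤˣ) (τ : E → ℤˣ) : isingGauge i j S2 (isingGauge i j S2 τ) = τ := by
  funext e
  simp only [isingGauge]
  rw [mul_right_comm (τ e * S2 (i e)) (S2 (j e)) (S2 (i e)), mul_assoc (τ e),
    Int.units_mul_self, mul_one, mul_assoc, Int.units_mul_self, mul_one]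

lemma pmul_pmul (S2 S : V → ℤˣ) : (fun v => (S v * S2 v) * S2 v) = S := by
  funext v; rw [mul_assoc, Int.units_mul_self, mul_one]

lemma isingH_gauge (S2 : V → ℤˣ) (τ : E → ℤˣ) (S : V → ℤˣ) :
    isingH i j (isingGauge i j S2 τ) S = isingH i j τ (fun v => S v * S2 v) := by
  unfold isingH isingGauge
  refine Finset.sum_congr rfl fun e _ => ?_
  push_cast
  ring

lemma sum_gauge (S2 : V → ℤˣ) (τ : E → ℤˣ) :
    ∑ e, ((isingGauge i j S2 τ e : ℤ) : ℝ) = isingH i j τ S2 := by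
  unfold isingH isingGauge
  refine Finset.sum_congr rfl fun e _ => ?_
  push_cast; ring

lemma sum_reindex_spin (S2 : V → ℤˣ) (f : (V → ℤˣ) → ℝ) :
    ∑ S : V → ℤˣ, f S = ∑ S : V → ℤˣ, f (fun v => S v * S2 v) := by
  refine (Fintype.sum_bijective (fun S => fun v => S v * S2 v)
    (Function.Involutive.bijective (fun S => pmul_pmul S2 S))
    _ f (fun x => rfl)).symm

lemma sum_reindex_tau (S2 : V → ℤˣ) (f : (E → ℤˣ) → ℝ) :
    ∑ τ : E → ℤˣ, f τ = ∑ τ : E → ℤˣ, f (isingGauge i j S2 τ) := by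
  refine (Fintype.sum_bijective (isingGauge i j S2)
    (Function.Involutive.bijective (gauge_gauge i j S2))
    _ f (fun x => rfl)).symm

lemma isingZ_gauge (β : ℝ) (S2 : V → ℤˣ) (τ : E → ℤˣ) :
    isingZ i j β (isingGauge i j S2 τ) = isingZ i j β τ := by
  unfold isingZ
  simp_rw [isingH_gauge]
  exact (sum_reindex_spin S2 (fun S => Real.exp (β * isingH i j τ S))).symm

lemma isingZ_pos (β : ℝ) (τ : E → ℤˣ) : 0 < isingZ i j β τ :=
  Finset.sum_pos (fun _ _ => Real.exp_pos _) Finset.univ_nonempty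

lemma isingH_gauge_self (S2 : V → ℤˣ) (τ : E → ℤˣ) :
    isingH i j (isingGauge i j S2 τ) S2 = ∑ e, ((τ e : ℤ) : ℝ) := by
  unfold isingH isingGauge
  refine Finset.sum_congr rfl fun e _ => ?_
  have key : ∀ t a b : ℝ, a * a = 1 → b * b = 1 → t * a * b * a * b = t := by
    intro t a b h1 h2
    linear_combination t * b * b * h1 + t * h2
  have h1 : ((S2 (i e) : ℤ) : ℝ) * ((S2 (i e) : ℤ) : ℝ) = 1 := by
    rcases Int.units_eq_one_or (S2 (i e)) with h | h <;> rw [h] <;> norm_num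
  have h2 : ((S2 (j e) : ℤ) : ℝ) * ((S2 (j e) : ℤ) : ℝ) = 1 := by
    rcases Int.units_eq_one_or (S2 (j e)) with h | h <;> rw [h] <;> norm_num
  push_cast
  exact key _ _ _ h1 h2

end aux

section main
variable {V E : Type*} [Fintype V] [DecidableEq V] [Fintype E] [DecidableEq E]
variable (i j : E → V)

lemma overlap_reindex (S2 : V → ℤˣ) (τ : E → ℤˣ) (β : ℝ) (g : ℝ → ℝ) (c : ℝ) :
    ∑ S1 : V → ℤˣ, g (c * ∑ v, ((S1 v : ℤ) : ℝ) * ((S2 v : ℤ) : ℝ)) *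
        Real.exp (β * isingH i j τ S1)
      = ∑ S1 : V → ℤˣ, g (c * ∑ v, ((S1 v : ℤ) : ℝ)) *
        Real.exp (β * isingH i j (isingGauge i j S2 τ) S1) := by
  have hrw := sum_reindex_spin S2 (fun (S1 : V → ℤˣ) =>
    g (c * ∑ v, ((S1 v : ℤ) : ℝ) * ((S2 v : ℤ) : ℝ)) * Real.exp (β * isingH i j τ S1))
  refine hrw.trans ?_
  apply Finset.sum_congr rfl
  intro S1 _
  beta_reduce
  rw [isingH_gauge]
  have hsum : ∑ v : V, (((S1 v * S2 v : ℤˣ) : ℤ) : ℝ) * ((S2 v : ℤ) : ℝ)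
      = ∑ v : V, ((S1 v : ℤ) : ℝ) := by
    refine Finset.sum_congr rfl fun v _ => ?_
    have h : ((S2 v : ℤ) : ℝ) * ((S2 v : ℤ) : ℝ) = 1 := by
      rcases Int.units_eq_one_or (S2 v) with h | h <;> rw [h] <;> norm_num
    push_cast
    linear_combination ((S1 v : ℤ) : ℝ) * h
  rw [hsum]

end main

/-- the distribution of the magnetization equals the distribution of the
two-replica overlap at temperatures β and β_p (identity of averages of g). -/
theorem stmt_6 {V E : Type*} [Fintype V] [DecidableEq V] [Fintype E] [DecidableEq E]
    (i j : E → V) (hij : ∀ e, i e ≠ j e)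
    (γ βp β : ℝ) (g : ℝ → ℝ) :
    ∑ τ : E → ℤˣ,
        (isingZ i j γ τ * Real.exp (βp * ∑ e, ((τ e : ℤ) : ℝ)) / isingZ i j βp τ) *
          ((∑ S : V → ℤˣ,
              g ((1 / (Fintype.card V : ℝ)) * ∑ v, ((S v : ℤ) : ℝ)) *
                Real.exp (β * isingH i j τ S)) / isingZ i j β τ)
      = ∑ τ : E → ℤˣ,
          (isingZ i j γ τ * Real.exp (βp * ∑ e, ((τ e : ℤ) : ℝ)) / isingZ i j βp τ) *
            ((∑ S1 : V → ℤˣ, ∑ S2 : V → ℤˣ,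
                g ((1 / (Fintype.card V : ℝ)) * ∑ v, ((S1 v : ℤ) : ℝ) * ((S2 v : ℤ) : ℝ)) *
                  Real.exp (β * isingH i j τ S1 + βp * isingH i j τ S2)) /
              (isingZ i j β τ * isingZ i j βp τ)) := by
  symm
  calc
    ∑ τ : E → ℤˣ,
        (isingZ i j γ τ * Real.exp (βp * ∑ e, ((τ e : ℤ) : ℝ)) / isingZ i j βp τ) *
          ((∑ S1 : V → ℤˣ, ∑ S2 : V → ℤˣ,
              g ((1 / (Fintype.card V : ℝ)) * ∑ v, ((S1 v : ℤ) : ℝ) * ((S2 v : ℤ) : ℝ)) *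
                Real.exp (β * isingH i j τ S1 + βp * isingH i j τ S2)) /
            (isingZ i j β τ * isingZ i j βp τ))
    _ = ∑ τ : E → ℤˣ, ∑ S2 : V → ℤˣ,
          (isingZ i j γ τ * Real.exp (βp * ∑ e, ((τ e : ℤ) : ℝ)) / isingZ i j βp τ) *
            Real.exp (βp * isingH i j τ S2) *
            (∑ S1 : V → ℤˣ, g ((1 / (Fintype.card V : ℝ)) * ∑ v, ((S1 v : ℤ) : ℝ)) *
              Real.exp (β * isingH i j (isingGauge i j S2 τ) S1)) /
            (isingZ i j β τ * isingZ i j βp τ) := by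
        refine Finset.sum_congr rfl fun τ _ => ?_
        have hD : (∑ S1 : V → ℤˣ, ∑ S2 : V → ℤˣ,
              g ((1 / (Fintype.card V : ℝ)) * ∑ v, ((S1 v : ℤ) : ℝ) * ((S2 v : ℤ) : ℝ)) *
                Real.exp (β * isingH i j τ S1 + βp * isingH i j τ S2))
            = ∑ S2 : V → ℤˣ, Real.exp (βp * isingH i j τ S2) *
                (∑ S1 : V → ℤˣ, g ((1 / (Fintype.card V : ℝ)) * ∑ v, ((S1 v : ℤ) : ℝ)) *
                  Real.exp (β * isingH i j (isingGauge i j S2 τ) S1)) := by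
          rw [Finset.sum_comm]
          apply Finset.sum_congr rfl
          intro S2 _
          rw [← overlap_reindex i j S2 τ β g (1 / (Fintype.card V : ℝ)), Finset.mul_sum]
          apply Finset.sum_congr rfl
          intro S1 _
          rw [Real.exp_add]
          ring
        have hpush : ∀ (A Z : ℝ) (f : (V → ℤˣ) → ℝ),
            A * ((∑ S2 : V → ℤˣ, f S2) / Z) = ∑ S2 : V → ℤˣ, A * f S2 / Z := by
          intro A Z f
          rw [Finset.sum_div, Finset.mul_sum]
          exact Finset.sum_congr rfl fun S2 _ => by ring
        rw [hD, hpush]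
        apply Finset.sum_congr rfl
        intro S2 _
        ring
    _ = ∑ S2 : V → ℤˣ, ∑ τ : E → ℤˣ,
          (isingZ i j γ τ * Real.exp (βp * ∑ e, ((τ e : ℤ) : ℝ)) / isingZ i j βp τ) *
            Real.exp (βp * isingH i j τ S2) *
            (∑ S1 : V → ℤˣ, g ((1 / (Fintype.card V : ℝ)) * ∑ v, ((S1 v : ℤ) : ℝ)) *
              Real.exp (β * isingH i j (isingGauge i j S2 τ) S1)) /
            (isingZ i j β τ * isingZ i j βp τ) := by rw [Finset.sum_comm]
    _ = ∑ S2 : V → ℤˣ, ∑ τ : E → ℤˣ,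
          (isingZ i j γ τ * Real.exp (βp * isingH i j τ S2) / isingZ i j βp τ) *
            Real.exp (βp * ∑ e, ((τ e : ℤ) : ℝ)) *
            (∑ S1 : V → ℤˣ, g ((1 / (Fintype.card V : ℝ)) * ∑ v, ((S1 v : ℤ) : ℝ)) *
              Real.exp (β * isingH i j τ S1)) /
            (isingZ i j β τ * isingZ i j βp τ) := by
        refine Finset.sum_congr rfl fun S2 _ => ?_
        have htr := sum_reindex_tau i j S2 (fun τ : E → ℤˣ =>
          (isingZ i j γ τ * Real.exp (βp * ∑ e, ((τ e : ℤ) : ℝ)) / isingZ i j βp τ) *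
            Real.exp (βp * isingH i j τ S2) *
            (∑ S1 : V → ℤˣ, g ((1 / (Fintype.card V : ℝ)) * ∑ v, ((S1 v : ℤ) : ℝ)) *
              Real.exp (β * isingH i j (isingGauge i j S2 τ) S1)) /
            (isingZ i j β τ * isingZ i j βp τ))
        refine htr.trans ?_
        apply Finset.sum_congr rfl
        intro τ _
        beta_reduce
        rw [isingZ_gauge, isingZ_gauge, isingZ_gauge, sum_gauge, isingH_gauge_self,
          gauge_gauge]
    _ = ∑ τ : E → ℤˣ, ∑ S2 : V → ℤˣ,
          (isingZ i j γ τ * Real.exp (βp * isingH i j τ S2) / isingZ i j βp τ) *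
            Real.exp (βp * ∑ e, ((τ e : ℤ) : ℝ)) *
            (∑ S1 : V → ℤˣ, g ((1 / (Fintype.card V : ℝ)) * ∑ v, ((S1 v : ℤ) : ℝ)) *
              Real.exp (β * isingH i j τ S1)) *
            (isingZ i j β τ * isingZ i j βp τ)⁻¹ := by
        rw [Finset.sum_comm]
        exact Finset.sum_congr rfl fun τ _ => Finset.sum_congr rfl fun S2 _ => by
          rw [div_eq_mul_inv]
    _ = ∑ τ : E → ℤˣ,
          (isingZ i j γ τ * Real.exp (βp * ∑ e, ((τ e : ℤ) : ℝ)) / isingZ i j βp τ) *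
            ((∑ S : V → ℤˣ,
                g ((1 / (Fintype.card V : ℝ)) * ∑ v, ((S v : ℤ) : ℝ)) *
                  Real.exp (β * isingH i j τ S)) / isingZ i j β τ) := by
        refine Finset.sum_congr rfl fun τ _ => ?_
        have hstep : ∀ S2 : V → ℤˣ,
            (isingZ i j γ τ * Real.exp (βp * isingH i j τ S2) / isingZ i j βp τ) *
              Real.exp (βp * ∑ e, ((τ e : ℤ) : ℝ)) *
              (∑ S1 : V → ℤˣ, g ((1 / (Fintype.card V : ℝ)) * ∑ v, ((S1 v : ℤ) : ℝ)) *
                Real.exp (β * isingH i j τ S1)) *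
              (isingZ i j β τ * isingZ i j βp τ)⁻¹
            = Real.exp (βp * isingH i j τ S2) *
                (isingZ i j γ τ * Real.exp (βp * ∑ e, ((τ e : ℤ) : ℝ)) *
                  (∑ S1 : V → ℤˣ, g ((1 / (Fintype.card V : ℝ)) * ∑ v, ((S1 v : ℤ) : ℝ)) *
                    Real.exp (β * isingH i j τ S1)) /
                  (isingZ i j βp τ * (isingZ i j β τ * isingZ i j βp τ))) := by
          intro S2; ring
        rw [Finset.sum_congr rfl fun S2 _ => hstep S2, ← Finset.sum_mul]
        rw [show (∑ S2 : V → ℤˣ, Real.exp (βp * isingH i j τ S2)) = isingZ i j βp τ from rfl]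
        have h1 : isingZ i j βp τ ≠ 0 := (isingZ_pos i j βp τ).ne'
        have h2 : isingZ i j β τ ≠ 0 := (isingZ_pos i j β τ).ne'
        field_simp
end

section
/- Fix a site v₀ ∈ V. For all real numbers γ, β, β_p, the disorder-averaged local magnetization factorizes after gauge averaging: Σ_τ Z_τ(γ) · (exp(β_p·Σ_{e∈E} τ(e)) / Z_τ(β_p)) · (Σ_S S(v₀)·exp(β·H_τ(S))) / Z_τ(β) = (1/2^N) · Σ_τ Z_τ(γ) · ((Σ_σ σ(v₀)·exp(β_p·H_τ(σ))) / Z_τ(β_p)) · ((Σ_S S(v₀)·exp(β·H_τ(S))) / Z_τ(β)), where σ and S independently range over all spin configurations. -/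
open Finset

section aux

variable {V E : Type*} [Fintype V] [DecidableEq V] [Fintype E] [DecidableEq E]
  (i j : E → V)

/-- Gauge transformation on disorder. -/
def gaugeT (i j : E → V) (σ : V → ℤˣ) (τ : E → ℤˣ) : E → ℤˣ :=
  fun e => τ e * σ (i e) * σ (j e)

lemma gaugeT_inv (σ : V → ℤˣ) : Function.Involutive (gaugeT i j σ) := by
  intro τ; funext e
  simp only [gaugeT]
  rcases Int.units_eq_one_or (σ (i e)) with h | h <;>
    rcases Int.units_eq_one_or (σ (j e)) with h' | h' <;> simp [h, h']

lemma flip_inv (σ : V → ℤˣ) :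
    Function.Involutive (fun (S : V → ℤˣ) => fun v => S v * σ v) := by
  intro S; funext v
  rcases Int.units_eq_one_or (σ v) with h | h <;> simp [h]

lemma H_gauge (σ τ : _) (S : V → ℤˣ) :
    isingH i j (gaugeT i j σ τ) S = isingH i j τ (fun v => S v * σ v) := by
  unfold isingH gaugeT
  refine Finset.sum_congr rfl fun e _ => ?_
  push_cast
  ring

lemma H_gauge' (σ τ : _) (S : V → ℤˣ) :
    isingH i j (gaugeT i j σ τ) (fun v => S v * σ v) = isingH i j τ S := by
  rw [H_gauge]
  congr 1
  exact flip_inv σ S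

lemma Z_gauge (b : ℝ) (σ τ : _) :
    isingZ i j b (gaugeT i j σ τ) = isingZ i j b τ := by
  unfold isingZ
  rw [← Equiv.sum_comp (Function.Involutive.toPerm _ (flip_inv (V := V) σ))
    (fun S => Real.exp (b * isingH i j (gaugeT i j σ τ) S))]
  refine Finset.sum_congr rfl fun S _ => ?_
  simp only [Function.Involutive.coe_toPerm]
  rw [H_gauge' i j σ τ S]

lemma M_gauge (b : ℝ) (v₀ : V) (σ τ : _) :
    ∑ S : V → ℤˣ, ((S v₀ : ℤ) : ℝ) * Real.exp (b * isingH i j (gaugeT i j σ τ) S)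
      = ((σ v₀ : ℤ) : ℝ) *
        ∑ S : V → ℤˣ, ((S v₀ : ℤ) : ℝ) * Real.exp (b * isingH i j τ S) := by
  rw [← Equiv.sum_comp (Function.Involutive.toPerm _ (flip_inv (V := V) σ))
    (fun S => ((S v₀ : ℤ) : ℝ) * Real.exp (b * isingH i j (gaugeT i j σ τ) S)),
    Finset.mul_sum]
  refine Finset.sum_congr rfl fun S _ => ?_
  simp only [Function.Involutive.coe_toPerm]
  rw [H_gauge' i j σ τ S]
  push_cast
  ring

lemma edge_sum_gauge (σ τ : _) :
    ∑ e, (((gaugeT i j σ τ) e : ℤ) : ℝ) = isingH i j τ σ := by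
  unfold gaugeT isingH
  refine Finset.sum_congr rfl fun e _ => ?_
  push_cast
  ring

end aux

/-- the disorder-averaged local magnetization factorizes after gauge
averaging. -/
theorem stmt_9 {V E : Type*} [Fintype V] [DecidableEq V] [Fintype E] [DecidableEq E]
    (i j : E → V) (hij : ∀ e, i e ≠ j e) (v₀ : V)
    (γ β βp : ℝ) :
    ∑ τ : E → ℤˣ,
        isingZ i j γ τ * (Real.exp (βp * ∑ e, ((τ e : ℤ) : ℝ)) / isingZ i j βp τ) *
          ((∑ S : V → ℤˣ, ((S v₀ : ℤ) : ℝ) * Real.exp (β * isingH i j τ S)) /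
            isingZ i j β τ)
      = (1 / 2 ^ (Fintype.card V)) *
          ∑ τ : E → ℤˣ,
            isingZ i j γ τ *
              ((∑ σ : V → ℤˣ, ((σ v₀ : ℤ) : ℝ) * Real.exp (βp * isingH i j τ σ)) /
                isingZ i j βp τ) *
              ((∑ S : V → ℤˣ, ((S v₀ : ℤ) : ℝ) * Real.exp (β * isingH i j τ S)) /
                isingZ i j β τ) := by
  set F : (E → ℤˣ) → ℝ := fun τ =>
    isingZ i j γ τ * (Real.exp (βp * ∑ e, ((τ e : ℤ) : ℝ)) / isingZ i j βp τ) *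
      ((∑ S : V → ℤˣ, ((S v₀ : ℤ) : ℝ) * Real.exp (β * isingH i j τ S)) /
        isingZ i j β τ) with hF
  have key : ∀ σ : V → ℤˣ, (∑ τ : E → ℤˣ, F τ) =
      ∑ τ : E → ℤˣ,
        isingZ i j γ τ *
          ((((σ v₀ : ℤ) : ℝ) * Real.exp (βp * isingH i j τ σ)) / isingZ i j βp τ) *
          ((∑ S : V → ℤˣ, ((S v₀ : ℤ) : ℝ) * Real.exp (β * isingH i j τ S)) /
            isingZ i j β τ) := by
    intro σ
    rw [← Equiv.sum_comp (Function.Involutive.toPerm _ (gaugeT_inv i j σ)) F]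
    refine Finset.sum_congr rfl fun τ _ => ?_
    simp only [Function.Involutive.coe_toPerm, hF]
    rw [Z_gauge, Z_gauge, Z_gauge, M_gauge, edge_sum_gauge]
    ring
  have card2 : (Fintype.card (V → ℤˣ) : ℝ) = 2 ^ (Fintype.card V) := by
    rw [Fintype.card_fun]
    push_cast
    norm_num
  have h2 : (0 : ℝ) < 2 ^ (Fintype.card V) := by positivity
  have hsum : (2 ^ (Fintype.card V) : ℝ) * (∑ τ : E → ℤˣ, F τ)
      = ∑ σ : V → ℤˣ, ∑ τ : E → ℤˣ,
          isingZ i j γ τ *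
            ((((σ v₀ : ℤ) : ℝ) * Real.exp (βp * isingH i j τ σ)) / isingZ i j βp τ) *
            ((∑ S : V → ℤˣ, ((S v₀ : ℤ) : ℝ) * Real.exp (β * isingH i j τ S)) /
              isingZ i j β τ) := by
    calc (2 ^ (Fintype.card V) : ℝ) * (∑ τ : E → ℤˣ, F τ)
        = ∑ _σ : V → ℤˣ, (∑ τ : E → ℤˣ, F τ) := by
          rw [Finset.sum_const, Finset.card_univ, nsmul_eq_mul, card2]
      _ = _ := Finset.sum_congr rfl fun σ _ => key σ
  rw [Finset.sum_comm] at hsum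
  have : ∑ τ : E → ℤˣ, ∑ σ : V → ℤˣ,
      isingZ i j γ τ *
        ((((σ v₀ : ℤ) : ℝ) * Real.exp (βp * isingH i j τ σ)) / isingZ i j βp τ) *
        ((∑ S : V → ℤˣ, ((S v₀ : ℤ) : ℝ) * Real.exp (β * isingH i j τ S)) /
          isingZ i j β τ)
      = ∑ τ : E → ℤˣ,
          isingZ i j γ τ *
            ((∑ σ : V → ℤˣ, ((σ v₀ : ℤ) : ℝ) * Real.exp (βp * isingH i j τ σ)) /
              isingZ i j βp τ) *
            ((∑ S : V → ℤˣ, ((S v₀ : ℤ) : ℝ) * Real.exp (β * isingH i j τ S)) /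
              isingZ i j β τ) := by
    refine Finset.sum_congr rfl fun τ _ => ?_
    rw [← Finset.sum_mul, ← Finset.mul_sum, ← Finset.sum_div]
  rw [this] at hsum
  rw [← hsum]
  field_simp
end

section
/- Let f : ℝ^E → ℝ be a bounded measurable function that is gauge invariant, i.e. f(J^σ) = f(J) for all J and all σ : V → {−1, 1}, where J^σ(e) = J(e)·σ(i(e))·σ(j(e)). Then for all real γ and β_p, ∫_{ℝ^E} Z_J(γ) · (exp(β_p·Σ_{e∈E} J(e)) / Z_J(β_p)) · f(J) dμ(J) = (1/2^N) · ∫_{ℝ^E} Z_J(γ)·f(J) dμ(J); in particular the left-hand side does not depend on β_p. -/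
open Finset MeasureTheory ProbabilityTheory
open scoped NNReal

/-- Gaussian-disorder Ising energy H_J(S), spins valued in the units of the integers. -/
noncomputable def isingHJ {V E : Type*} [Fintype E] (i j : E → V)
    (J : E → ℝ) (S : V → ℤˣ) : ℝ :=
  ∑ e, J e * ((S (i e) : ℤ) : ℝ) * ((S (j e) : ℤ) : ℝ)

/-- Gaussian-disorder partition function Z_J(β). -/
noncomputable def isingZJ {V E : Type*} [Fintype V] [DecidableEq V] [Fintype E]
    (i j : E → V) (β : ℝ) (J : E → ℝ) : ℝ :=
  ∑ S : V → ℤˣ, Real.exp (β * isingHJ i j J S)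

lemma unit_sq (u : ℤˣ) : ((u : ℤ) : ℝ) * ((u : ℤ) : ℝ) = 1 := by
  rw [← Int.cast_mul, ← Units.val_mul, Int.units_mul_self, Units.val_one, Int.cast_one]

lemma integrable_exp_mul_gauss (c : ℝ) :
    Integrable (fun x => Real.exp (c * x)) (gaussianReal 0 1) := by
  rw [gaussianReal_of_var_ne_zero _ one_ne_zero,
    integrable_withDensity_iff (measurable_gaussianPDF _ _)
      (ae_of_all _ fun x => ENNReal.ofReal_lt_top)]
  have key : Integrable (fun x : ℝ =>
      (Real.exp (c ^ 2 / 2) * (Real.sqrt (2 * Real.pi * ((1 : ℝ≥0) : ℝ)))⁻¹) *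
        Real.exp (-(2 : ℝ)⁻¹ * (x - c) ^ 2)) volume :=
    ((integrable_exp_neg_mul_sq (by norm_num : (0:ℝ) < 2⁻¹)).comp_sub_right c).const_mul _
  refine key.congr (ae_of_all _ fun x => ?_)
  simp only [gaussianPDF_def, ENNReal.toReal_ofReal (gaussianPDFReal_nonneg _ _ _),
    gaussianPDFReal]
  push_cast
  rw [ENNReal.toReal_ofReal (by positivity)]
  have h : Real.exp (-2⁻¹ * (x - c) ^ 2) * Real.exp (c ^ 2 / 2)
      = Real.exp (c * x) * Real.exp (-(x - 0) ^ 2 / (2 * 1)) := by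
    rw [← Real.exp_add, ← Real.exp_add]; congr 1; ring
  norm_num at h ⊢
  linear_combination ((√Real.pi)⁻¹ * (√2)⁻¹) * h

lemma integrable_fin_pi_prod {n : ℕ} {f : Fin n → ℝ → ℝ}
    (hf : ∀ e, Integrable (f e) (gaussianReal 0 1)) :
    Integrable (fun x : Fin n → ℝ => ∏ e, f e (x e))
      (Measure.pi fun _ => gaussianReal 0 1) := by
  induction n with
  | zero =>
      simp only [Finset.univ_eq_empty, Finset.prod_empty]
      exact integrable_const 1
  | succ n ih =>
      have h := (MeasureTheory.measurePreserving_piFinSuccAbove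
        (fun _ : Fin (n+1) => gaussianReal 0 1) 0).symm
      rw [← h.integrable_comp_emb (MeasurableEquiv.measurableEmbedding _)]
      simp_rw [MeasurableEquiv.piFinSuccAbove_symm_apply, Fin.insertNthEquiv,
        Fin.prod_univ_succ, Fin.insertNth_zero]
      simp only [Fin.zero_succAbove, Function.comp_def, Fin.cons_zero, Fin.cons_succ]
      exact Integrable.mul_prod (hf 0) (ih fun e => hf _)

lemma integrable_pi_prod {ι : Type*} [Fintype ι] {f : ι → ℝ → ℝ}
    (hf : ∀ e, Integrable (f e) (gaussianReal 0 1)) :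
    Integrable (fun x : ι → ℝ => ∏ e, f e (x e))
      (Measure.pi fun _ : ι => gaussianReal 0 1) := by
  let e := (Fintype.equivFin ι).symm
  rw [← (MeasureTheory.measurePreserving_piCongrLeft (fun _ : ι => gaussianReal 0 1)
      e).integrable_comp_emb (MeasurableEquiv.measurableEmbedding _)]
  simp_rw [← e.prod_comp, MeasurableEquiv.coe_piCongrLeft, Function.comp_def,
    Equiv.piCongrLeft_apply_apply]
  exact integrable_fin_pi_prod fun k => hf _

section gauge

set_option linter.unusedSectionVars false

variable {V E : Type*} [Fintype V] [DecidableEq V] [Fintype E] (i j : E → V)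

lemma measurable_isingHJ (S : V → ℤˣ) :
    Measurable (fun J : E → ℝ => isingHJ i j J S) := by
  unfold isingHJ
  exact Finset.measurable_sum _ fun e _ =>
    ((measurable_pi_apply e).mul_const _).mul_const _

lemma measurable_isingZJ (β : ℝ) : Measurable (isingZJ i j β (E := E)) := by
  unfold isingZJ
  exact Finset.measurable_sum _ fun S _ =>
    (Real.measurable_exp.comp ((measurable_isingHJ i j S).const_mul β))

lemma isingZJ_pos (β : ℝ) (J : E → ℝ) : 0 < isingZJ i j β J := by
  unfold isingZJ
  exact Finset.sum_pos (fun S _ => Real.exp_pos _) ⟨fun _ => 1, Finset.mem_univ _⟩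

lemma exp_le_isingZJ (β : ℝ) (J : E → ℝ) (σ : V → ℤˣ) :
    Real.exp (β * isingHJ i j J σ) ≤ isingZJ i j β J :=
  Finset.single_le_sum (f := fun S => Real.exp (β * isingHJ i j J S))
    (fun S _ => (Real.exp_pos _).le) (Finset.mem_univ σ)

lemma integrable_isingZJ (β : ℝ) :
    Integrable (isingZJ i j β) (Measure.pi fun _ : E => gaussianReal 0 1) := by
  unfold isingZJ
  refine integrable_finset_sum _ fun S _ => ?_
  have heq : (fun J : E → ℝ => Real.exp (β * isingHJ i j J S))
      = fun J => ∏ e, Real.exp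
          ((β * ((S (i e) : ℤ) : ℝ) * ((S (j e) : ℤ) : ℝ)) * J e) := by
    funext J
    rw [← Real.exp_sum]
    congr 1
    unfold isingHJ
    rw [Finset.mul_sum]
    exact Finset.sum_congr rfl fun e _ => by ring
  rw [heq]
  exact integrable_pi_prod fun e => integrable_exp_mul_gauss _

/-- gauge transformation as a measurable equivalence -/
noncomputable def gaugeEquiv (σ : V → ℤˣ) : (E → ℝ) ≃ᵐ (E → ℝ) where
  toFun J := fun e => J e * ((σ (i e) : ℤ) : ℝ) * ((σ (j e) : ℤ) : ℝ)
  invFun J := fun e => J e * ((σ (i e) : ℤ) : ℝ) * ((σ (j e) : ℤ) : ℝ)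
  left_inv J := by
    funext e
    have h1 := unit_sq (σ (i e)); have h2 := unit_sq (σ (j e))
    dsimp only
    linear_combination (J e * ((σ (j e) : ℤ) : ℝ) * ((σ (j e) : ℤ) : ℝ)) * h1 + J e * h2
  right_inv J := by
    funext e
    have h1 := unit_sq (σ (i e)); have h2 := unit_sq (σ (j e))
    dsimp only
    linear_combination (J e * ((σ (j e) : ℤ) : ℝ) * ((σ (j e) : ℤ) : ℝ)) * h1 + J e * h2
  measurable_toFun := measurable_pi_iff.mpr fun e =>
    ((measurable_pi_apply e).mul_const _).mul_const _
  measurable_invFun := measurable_pi_iff.mpr fun e =>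
    ((measurable_pi_apply e).mul_const _).mul_const _

lemma gaugeEquiv_apply (σ : V → ℤˣ) (J : E → ℝ) :
    gaugeEquiv i j σ J = fun e => J e * ((σ (i e) : ℤ) : ℝ) * ((σ (j e) : ℤ) : ℝ) := rfl

lemma gauge_measurePreserving (σ : V → ℤˣ) :
    MeasurePreserving (gaugeEquiv i j σ)
      (Measure.pi fun _ : E => gaussianReal 0 1)
      (Measure.pi fun _ : E => gaussianReal 0 1) := by
  have hcoord : ∀ u : ℤˣ, MeasurePreserving (fun x : ℝ => x * ((u : ℤ) : ℝ))
      (gaussianReal 0 1) (gaussianReal 0 1) := by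
    intro u
    refine ⟨measurable_mul_const _, ?_⟩
    rw [gaussianReal_map_mul_const]
    congr 1
    · simp
    · ext
      simp [sq, unit_sq u]
  have h := MeasureTheory.measurePreserving_pi
    (fun _ : E => gaussianReal 0 1) (fun _ : E => gaussianReal 0 1)
    (f := fun e (x : ℝ) => x * (((σ (i e) * σ (j e) : ℤˣ) : ℤ) : ℝ))
    (fun e => hcoord _)
  have heq : (fun (J : E → ℝ) e => J e * (((σ (i e) * σ (j e) : ℤˣ) : ℤ) : ℝ))
      = (gaugeEquiv i j σ : (E → ℝ) → (E → ℝ)) := by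
    funext J e
    show J e * (((σ (i e) * σ (j e) : ℤˣ) : ℤ) : ℝ)
      = J e * ((σ (i e) : ℤ) : ℝ) * ((σ (j e) : ℤ) : ℝ)
    push_cast
    ring
  rwa [heq] at h

lemma isingHJ_gauge (σ : V → ℤˣ) (J : E → ℝ) (S : V → ℤˣ) :
    isingHJ i j (gaugeEquiv i j σ J) S = isingHJ i j J (S * σ) := by
  unfold isingHJ
  rw [gaugeEquiv_apply]
  refine Finset.sum_congr rfl fun e _ => ?_
  show J e * ((σ (i e) : ℤ) : ℝ) * ((σ (j e) : ℤ) : ℝ)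
        * ((S (i e) : ℤ) : ℝ) * ((S (j e) : ℤ) : ℝ)
      = J e * (((S (i e) * σ (i e) : ℤˣ) : ℤ) : ℝ) * (((S (j e) * σ (j e) : ℤˣ) : ℤ) : ℝ)
  push_cast
  ring

lemma isingZJ_gauge (σ : V → ℤˣ) (β : ℝ) (J : E → ℝ) :
    isingZJ i j β (gaugeEquiv i j σ J) = isingZJ i j β J := by
  unfold isingZJ
  calc ∑ S : V → ℤˣ, Real.exp (β * isingHJ i j (gaugeEquiv i j σ J) S)
      = ∑ S : V → ℤˣ, Real.exp (β * isingHJ i j J (S * σ)) :=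
        Finset.sum_congr rfl fun S _ => by rw [isingHJ_gauge]
    _ = ∑ S : V → ℤˣ, Real.exp (β * isingHJ i j J S) :=
        Fintype.sum_equiv (Equiv.mulRight σ) _ _ (fun S => rfl)

lemma sum_gauge_s17 (σ : V → ℤˣ) (J : E → ℝ) :
    ∑ e, gaugeEquiv i j σ J e = isingHJ i j J σ := rfl

end gauge

/-- for a bounded measurable gauge-invariant f, the correlated
Gaussian-disorder average does not depend on β_p. -/
theorem stmt_17 {V E : Type*} [Fintype V] [DecidableEq V] [Fintype E] [DecidableEq E]
    (i j : E → V) (hij : ∀ e, i e ≠ j e)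
    (f : (E → ℝ) → ℝ) (hmeas : Measurable f) (hbdd : ∃ C, ∀ J, |f J| ≤ C)
    (hf : ∀ (J : E → ℝ) (σ : V → ℤˣ),
      f (fun e => J e * ((σ (i e) : ℤ) : ℝ) * ((σ (j e) : ℤ) : ℝ)) = f J)
    (γ βp : ℝ) :
    ∫ J : E → ℝ,
        isingZJ i j γ J * (Real.exp (βp * ∑ e, J e) / isingZJ i j βp J) * f J
        ∂(Measure.pi fun _ : E => gaussianReal 0 1)
      = (1 / 2 ^ (Fintype.card V)) *
          ∫ J : E → ℝ, isingZJ i j γ J * f J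
            ∂(Measure.pi fun _ : E => gaussianReal 0 1) := by
  obtain ⟨C, hC⟩ := hbdd
  set μ : Measure (E → ℝ) := Measure.pi fun _ : E => gaussianReal 0 1 with hμ
  set g : (E → ℝ) → ℝ := fun J =>
    isingZJ i j γ J * (Real.exp (βp * ∑ e, J e) / isingZJ i j βp J) * f J with hg
  set h : (V → ℤˣ) → (E → ℝ) → ℝ := fun σ J =>
    isingZJ i j γ J * (Real.exp (βp * isingHJ i j J σ) / isingZJ i j βp J) * f J with hh
  -- each gauge-transformed integral equals the original
  have key : ∀ σ : V → ℤˣ, ∫ J, g J ∂μ = ∫ J, h σ J ∂μ := by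
    intro σ
    have hcomp := (gauge_measurePreserving i j σ).integral_comp
      (MeasurableEquiv.measurableEmbedding _) g
    rw [← hcomp]
    refine integral_congr_ae (ae_of_all _ fun J => ?_)
    show g (gaugeEquiv i j σ J) = h σ J
    rw [hg, hh]
    dsimp only
    rw [isingZJ_gauge, isingZJ_gauge, sum_gauge_s17, gaugeEquiv_apply, hf]
  -- integrability of each h σ
  have hint : ∀ σ : V → ℤˣ, Integrable (h σ) μ := by
    intro σ
    refine Integrable.mono' ((integrable_isingZJ i j γ).const_mul C)
      (((((measurable_isingZJ i j γ).mul
          (((measurable_isingHJ i j σ).const_mul βp).exp.div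
            (measurable_isingZJ i j βp))).mul hmeas)).aestronglyMeasurable)
      (ae_of_all _ fun J => ?_)
    have hpos := isingZJ_pos i j γ J
    have hppos := isingZJ_pos i j βp J
    have hratio : |Real.exp (βp * isingHJ i j J σ) / isingZJ i j βp J| ≤ 1 := by
      rw [abs_of_nonneg (div_nonneg (Real.exp_pos _).le hppos.le)]
      exact (div_le_one hppos).mpr (exp_le_isingZJ i j βp J σ)
    calc ‖h σ J‖
        = |isingZJ i j γ J| * |Real.exp (βp * isingHJ i j J σ) / isingZJ i j βp J| * |f J| := by
          rw [hh]; dsimp only; rw [Real.norm_eq_abs, abs_mul, abs_mul]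
      _ ≤ |isingZJ i j γ J| * 1 * C :=
          mul_le_mul (mul_le_mul le_rfl hratio (abs_nonneg _) (abs_nonneg _)) (hC J)
            (abs_nonneg _) (by positivity)
      _ = C * isingZJ i j γ J := by rw [abs_of_pos hpos]; ring
  -- summing over all gauges
  have hsum : ∀ J, ∑ σ : V → ℤˣ, h σ J = isingZJ i j γ J * f J := by
    intro J
    have hterm : ∀ σ : V → ℤˣ, h σ J
        = (isingZJ i j γ J * f J / isingZJ i j βp J) * Real.exp (βp * isingHJ i j J σ) := by
      intro σ; rw [hh]; dsimp only; ring
    rw [Finset.sum_congr rfl fun σ _ => hterm σ, ← Finset.mul_sum]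
    have hZ : ∑ σ : V → ℤˣ, Real.exp (βp * isingHJ i j J σ) = isingZJ i j βp J := rfl
    rw [hZ, div_mul_cancel₀ _ (isingZJ_pos i j βp J).ne']
  have hcard : (Fintype.card (V → ℤˣ) : ℝ) = 2 ^ Fintype.card V := by
    rw [Fintype.card_fun]
    norm_num
  have big : (2 ^ Fintype.card V : ℝ) * ∫ J, g J ∂μ
      = ∫ J, isingZJ i j γ J * f J ∂μ := by
    calc (2 ^ Fintype.card V : ℝ) * ∫ J, g J ∂μ
        = ∑ σ : V → ℤˣ, ∫ J, h σ J ∂μ := by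
          rw [Finset.sum_congr rfl fun σ _ => (key σ).symm, Finset.sum_const,
            Finset.card_univ, nsmul_eq_mul, hcard]
      _ = ∫ J, ∑ σ : V → ℤˣ, h σ J ∂μ := (integral_finset_sum _ fun σ _ => hint σ).symm
      _ = ∫ J, isingZJ i j γ J * f J ∂μ := integral_congr_ae (ae_of_all _ fun J => hsum J)
  rw [← big, one_div, inv_mul_cancel_left₀ (by positivity : (2 ^ Fintype.card V : ℝ) ≠ 0)]
end
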